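/- arXiv:1210.2190 — 3 statements merged into one kernel-verified Lean document; each statement's English description precedes it below -/
import Mathlib

section
/- Let u : ℝⁿ → ℝ be a convex function such that u(x) − |x|²/2 is periodic with fundamental domain P = [−1/2, 1/2]ⁿ, and suppose ∫_{[−3,3]ⁿ} u² dx ≤ C₁. Then there is a constant C₀ depending only on C₁ and n such that sup_{x ∈ P} |u(x)| ≤ C₀. -/
/-!
Midpoint convexity gives `2 u(x) ≤ u(x + y) + u(x - y)` and `2 u(x + y) ≤ u(x) + u(x + 2y)`.
Averaging over `y` in the unit cube `P` bounds `|u(x)|` by three averages of `u` over affine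
images `x + cP` with `1 ≤ |c| ≤ 2`; these lie in `[-3, 3]ⁿ` and have volume at least `1`, so each
average is at most `∫_{[-3,3]ⁿ} |u| ≤ (∫_{[-3,3]ⁿ} u² + 6ⁿ) / 2`.
-/

open MeasureTheory Pointwise

section Convex

variable {E : Type*} [AddCommGroup E] [Module ℝ E] {u : E → ℝ}

lemma ConvexOn.two_mul_le_add_sub (hu : ConvexOn ℝ Set.univ u) (x t : E) :
    2 * u x ≤ u (x + t) + u (x - t) := by
  have h := hu.2 (Set.mem_univ (x + t)) (Set.mem_univ (x - t))
    (by norm_num : (0:ℝ) ≤ 1/2) (by norm_num : (0:ℝ) ≤ 1/2) (by norm_num)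
  rw [show (1/2 : ℝ) • (x + t) + (1/2 : ℝ) • (x - t) = x by module, smul_eq_mul,
    smul_eq_mul] at h
  linarith

lemma ConvexOn.two_mul_add_le_add_two_smul (hu : ConvexOn ℝ Set.univ u) (x t : E) :
    2 * u (x + t) ≤ u x + u (x + (2:ℝ) • t) := by
  have h := hu.2 (Set.mem_univ x) (Set.mem_univ (x + (2:ℝ) • t))
    (by norm_num : (0:ℝ) ≤ 1/2) (by norm_num : (0:ℝ) ≤ 1/2) (by norm_num)
  rw [show (1/2 : ℝ) • x + (1/2 : ℝ) • (x + (2:ℝ) • t) = x + t by module, smul_eq_mul,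
    smul_eq_mul] at h
  linarith

variable [MeasurableSpace E] {μ : Measure E} [IsProbabilityMeasure μ]

lemma ConvexOn.two_mul_le_integral_add_add_integral_sub (hu : ConvexOn ℝ Set.univ u) (x : E)
    (hadd : Integrable (fun t => u (x + t)) μ) (hsub : Integrable (fun t => u (x - t)) μ) :
    2 * u x ≤ ∫ t, u (x + t) ∂μ + ∫ t, u (x - t) ∂μ := by
  rw [← integral_add hadd hsub]
  simpa using integral_mono (integrable_const (2 * u x)) (hadd.add hsub) (hu.two_mul_le_add_sub x)

lemma ConvexOn.two_mul_integral_add_sub_integral_add_two_smul_le (hu : ConvexOn ℝ Set.univ u)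
    (x : E) (h₁ : Integrable (fun t => u (x + t)) μ)
    (h₂ : Integrable (fun t => u (x + (2:ℝ) • t)) μ) :
    2 * ∫ t, u (x + t) ∂μ - ∫ t, u (x + (2:ℝ) • t) ∂μ ≤ u x := by
  rw [← integral_const_mul, ← integral_sub (h₁.const_mul 2) h₂]
  simpa using integral_mono ((h₁.const_mul 2).sub h₂) (integrable_const (u x))
    fun t => sub_le_iff_le_add.2 (hu.two_mul_add_le_add_two_smul x t)

end Convex

lemma integral_abs_le_integral_sq_add_measureReal_div_two {α : Type*} [MeasurableSpace α]
    {μ : Measure α} [IsFiniteMeasure μ] {f : α → ℝ} (hf : Integrable (fun a => f a ^ 2) μ) :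
    ∫ a, |f a| ∂μ ≤ (∫ a, f a ^ 2 ∂μ + μ.real Set.univ) / 2 := by
  have hg : Integrable (fun a => (f a ^ 2 + 1) / 2) μ := (hf.add (integrable_const 1)).div_const 2
  calc ∫ a, |f a| ∂μ ≤ ∫ a, (f a ^ 2 + 1) / 2 ∂μ :=
        integral_mono_of_nonneg (.of_forall fun a => abs_nonneg _) hg <| .of_forall fun a => by
          nlinarith [sq_nonneg (|f a| - 1), sq_abs (f a)]
    _ = (∫ a, f a ^ 2 ∂μ + μ.real Set.univ) / 2 := by
        rw [integral_div, integral_add hf (integrable_const 1), integral_const, smul_eq_mul,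
          mul_one]

lemma abs_setIntegral_comp_add_smul_le {E : Type*} [NormedAddCommGroup E] [NormedSpace ℝ E]
    [FiniteDimensional ℝ E] [MeasurableSpace E] [BorelSpace E] (μ : Measure E)
    [μ.IsAddHaarMeasure] {u : E → ℝ} {s t : Set E} (hu : IntegrableOn u t μ) (x : E) {c : ℝ}
    (hc : 1 ≤ |c|) (hst : ∀ y ∈ s, x + c • y ∈ t) :
    |∫ y in s, u (x + c • y) ∂μ| ≤ ∫ z in t, |u z| ∂μ := by
  have hc₀ : c ≠ 0 := by rintro rfl; norm_num at hc
  have hJ : |(c ^ Module.finrank ℝ E)⁻¹| ≤ 1 := by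
    rw [abs_inv, abs_pow]
    exact inv_le_one_of_one_le₀ (one_le_pow₀ hc)
  have himage : (x + ·) '' (c • s) ⊆ t := by
    rintro _ ⟨_, ⟨y, hy, rfl⟩, rfl⟩
    exact hst y hy
  calc |∫ y in s, u (x + c • y) ∂μ| ≤ ∫ y in s, |u (x + c • y)| ∂μ :=
        abs_integral_le_integral_abs
    _ = |(c ^ Module.finrank ℝ E)⁻¹| * ∫ y in c • s, |u (x + y)| ∂μ :=
        Measure.setIntegral_comp_smul μ (fun y => |u (x + y)|) s hc₀
    _ ≤ ∫ y in c • s, |u (x + y)| ∂μ :=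
        mul_le_of_le_one_left (integral_nonneg fun _ => abs_nonneg _) hJ
    _ = ∫ z in (x + ·) '' (c • s), |u z| ∂μ :=
        ((measurePreserving_add_left μ x).setIntegral_image_emb
          (measurableEmbedding_addLeft x) (fun z => |u z|) (c • s)).symm
    _ ≤ ∫ z in t, |u z| ∂μ :=
        setIntegral_mono_set hu.abs (.of_forall fun _ => abs_nonneg _) himage.eventuallyLE

lemma ConvexOn.abs_le_three_mul_setIntegral_abs {E : Type*} [NormedAddCommGroup E]
    [NormedSpace ℝ E] [FiniteDimensional ℝ E] [MeasurableSpace E] [BorelSpace E]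
    {μ : Measure E} [μ.IsAddHaarMeasure] {u : E → ℝ} (hu : ConvexOn ℝ Set.univ u)
    {s t : Set E} (hs : IsCompact s) (hμs : μ s = 1) (ht : IsCompact t) {x : E}
    (hst : ∀ c : ℝ, |c| ≤ 2 → ∀ y ∈ s, x + c • y ∈ t) :
    |u x| ≤ 3 * ∫ z in t, |u z| ∂μ := by
  set K := ∫ z in t, |u z| ∂μ
  have hcont : Continuous u := hu.locallyLipschitz.continuous
  have : IsProbabilityMeasure (μ.restrict s) := ⟨by rwa [Measure.restrict_apply_univ]⟩
  have hint : ∀ c : ℝ, Integrable (fun y => u (x + c • y)) (μ.restrict s) := fun c =>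
    (hcont.comp (continuous_const.add (continuous_const_smul c))).continuousOn
      |>.integrableOn_compact hs
  have hA : ∀ c : ℝ, 1 ≤ |c| → |c| ≤ 2 → |∫ y in s, u (x + c • y) ∂μ| ≤ K := fun c h₁ h₂ =>
    abs_setIntegral_comp_add_smul_le μ (hcont.continuousOn.integrableOn_compact ht) x h₁
      (hst c h₂)
  have hplus : |∫ y in s, u (x + y) ∂μ| ≤ K := by simpa using hA 1 (by norm_num) (by norm_num)
  have hminus : |∫ y in s, u (x - y) ∂μ| ≤ K := by
    simpa [sub_eq_add_neg] using hA (-1) (by norm_num) (by norm_num)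
  have htwo := hA 2 (by norm_num) (by norm_num)
  have hupper := hu.two_mul_le_integral_add_add_integral_sub x (by simpa using hint 1)
    (by simpa [sub_eq_add_neg] using hint (-1))
  have hlower := hu.two_mul_integral_add_sub_integral_add_two_smul_le x
    (by simpa using hint 1) (hint 2)
  rw [abs_le] at hplus hminus htwo ⊢
  constructor <;> linarith

lemma mem_Icc_neg_const_iff_norm_le {ι : Type*} [Fintype ι] {r : ℝ} (hr : 0 ≤ r) {y : ι → ℝ} :
    y ∈ Set.Icc (fun _ => -r) (fun _ => r) ↔ ‖y‖ ≤ r := by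
  simp only [Set.mem_Icc, pi_norm_le_iff_of_nonneg hr, Real.norm_eq_abs, abs_le, Pi.le_def,
    forall_and]

theorem sup_bound_of_L2_bound_periodic
    (n : ℕ) (C₁ : ℝ) :
    ∃ C₀ : ℝ, ∀ u : (Fin n → ℝ) → ℝ,
      ConvexOn ℝ Set.univ u →
      (∀ (m : Fin n → ℤ) (x : Fin n → ℝ),
        u (x + fun i => (m i : ℝ)) - (∑ i, (x i + (m i : ℝ)) ^ 2) / 2
          = u x - (∑ i, (x i) ^ 2) / 2) →
      (∫ x in Set.Icc (fun _ => (-3 : ℝ)) (fun _ => 3), (u x) ^ 2) ≤ C₁ →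
      ∀ x ∈ Set.Icc (fun _ => (-(1:ℝ)/2)) (fun _ => (1:ℝ)/2), |u x| ≤ C₀ := by
  refine ⟨3 * ((C₁ + 6 ^ n) / 2), fun u hconv _ hL2 x hx => ?_⟩
  set P : Set (Fin n → ℝ) := Set.Icc (fun _ => -(1:ℝ)/2) (fun _ => (1:ℝ)/2)
  set Q : Set (Fin n → ℝ) := Set.Icc (fun _ => -3) (fun _ => 3)
  have hP : volume P = 1 := by simp only [P, Real.volume_Icc_pi]; norm_num
  have hQ : volume.real Q = 6 ^ n := by
    rw [measureReal_def, Real.volume_Icc_pi_toReal fun _ => by norm_num]; norm_num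
  have hmem : ∀ c : ℝ, |c| ≤ 2 → ∀ t ∈ P, x + c • t ∈ Q := by
    intro c hc t ht
    simp only [P, Q, neg_div] at hx ht ⊢
    rw [mem_Icc_neg_const_iff_norm_le (by norm_num)] at hx ht ⊢
    calc ‖x + c • t‖ ≤ ‖x‖ + |c| * ‖t‖ := by
          rw [← Real.norm_eq_abs, ← norm_smul]; exact norm_add_le _ _
      _ ≤ 1 / 2 + 2 * (1 / 2) := by gcongr
      _ ≤ 3 := by norm_num
  have : IsFiniteMeasure (volume.restrict Q) := isFiniteMeasure_restrict.2 measure_Icc_lt_top.ne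
  have hL1 := integral_abs_le_integral_sq_add_measureReal_div_two
    ((hconv.locallyLipschitz.continuous.pow 2).integrableOn_Icc : IntegrableOn (u · ^ 2) Q)
  rw [measureReal_restrict_apply_univ, hQ] at hL1
  calc |u x| ≤ 3 * ∫ z in Q, |u z| :=
        hconv.abs_le_three_mul_setIntegral_abs isCompact_Icc hP isCompact_Icc hmem
    _ ≤ 3 * ((C₁ + 6 ^ n) / 2) := by linarith
end

section
/- Let u : ℝⁿ → ℝ be convex with |u(x)| ≤ C₀ for all x ∈ [−2,2]ⁿ. Suppose u attains its maximum over [−2,2]ⁿ at a vertex v of the cube. Then for any supporting affine function ℓ of u at v, the set of points x ∈ [−3,3]ⁿ where ℓ(x) ≥ ℓ(v) has Lebesgue measure at least 1. -/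
/-!
On the cube, `ℓ ≤ u ≤ u v = ℓ v`, so moving one coordinate of the vertex `v` into the cube does
not increase `ℓ`: every slope `a i` points away from the cube. Hence `ℓ ≥ ℓ v` on the unit cube
attached to `v` on the outside of `[-2, 2]ⁿ`, and that unit cube lies in `[-3, 3]ⁿ`.
-/

open MeasureTheory

variable {ι : Type*}

theorem mul_sub_nonpos_of_sum_mul_sub_nonpos [Fintype ι] [DecidableEq ι] {a v lo hi : ι → ℝ}
    (hv : v ∈ Set.Icc lo hi) (h : ∀ x ∈ Set.Icc lo hi, ∑ i, a i * (x i - v i) ≤ 0)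
    (i : ι) {t : ℝ} (ht : t ∈ Set.Icc (lo i) (hi i)) : a i * (t - v i) ≤ 0 := by
  have hmem : Function.update v i t ∈ Set.Icc lo hi :=
    ⟨le_update_iff.2 ⟨ht.1, fun j _ => hv.1 j⟩, update_le_iff.2 ⟨ht.2, fun j _ => hv.2 j⟩⟩
  simpa [Function.update_apply, ite_sub, mul_ite] using h _ hmem

def outerUnitCube (r : ℝ) (v : ι → ℝ) : Set (ι → ℝ) :=
  Set.Icc (fun i => if v i = r then r else -r - 1) (fun i => if v i = r then r + 1 else -r)

theorem volume_outerUnitCube [Fintype ι] (r : ℝ) (v : ι → ℝ) :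
    volume (outerUnitCube r v) = 1 := by
  rw [outerUnitCube, Real.volume_Icc_pi]
  refine Finset.prod_eq_one fun i _ => ?_
  split_ifs <;> norm_num

theorem outerUnitCube_subset_Icc {r : ℝ} (hr : 0 ≤ r) (v : ι → ℝ) :
    outerUnitCube r v ⊆ Set.Icc (fun _ => -r - 1) (fun _ => r + 1) := by
  intro x hx
  have hcoord : ∀ i, -r - 1 ≤ x i ∧ x i ≤ r + 1 := fun i => by
    have hlo := hx.1 i
    have hhi := hx.2 i
    dsimp only at hlo hhi
    split_ifs at hlo hhi <;> constructor <;> linarith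
  exact ⟨fun i => (hcoord i).1, fun i => (hcoord i).2⟩

theorem sum_mul_sub_nonneg_of_mem_outerUnitCube [Fintype ι] {r : ℝ} (hr : 0 < r)
    {a v x : ι → ℝ} (hvert : ∀ i, v i = -r ∨ v i = r)
    (hmax : ∀ y ∈ Set.Icc (fun _ => -r) (fun _ => r), ∑ i, a i * (y i - v i) ≤ 0)
    (hx : x ∈ outerUnitCube r v) : 0 ≤ ∑ i, a i * (x i - v i) := by
  classical
  have hv : v ∈ Set.Icc (fun _ => -r) (fun _ => r) :=
    ⟨fun i => by rcases hvert i with h | h <;> linarith,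
      fun i => by rcases hvert i with h | h <;> linarith⟩
  refine Finset.sum_nonneg fun i _ => ?_
  have hxlo := hx.1 i
  have hxhi := hx.2 i
  rcases hvert i with hneg | hpos
  · have hslope := mul_sub_nonpos_of_sum_mul_sub_nonpos hv hmax i (t := r) ⟨by linarith, le_rfl⟩
    have hne : v i ≠ r := by linarith
    simp only [hne, if_false] at hxlo hxhi
    rw [hneg] at hslope ⊢
    exact mul_nonneg_of_nonpos_of_nonpos (by nlinarith) (by linarith)
  · have hslope := mul_sub_nonpos_of_sum_mul_sub_nonpos hv hmax i (t := -r) ⟨le_rfl, by linarith⟩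
    simp only [hpos, if_true] at hxlo hxhi
    rw [hpos] at hslope ⊢
    exact mul_nonneg (by nlinarith) (by linarith)

theorem supporting_plane_superlevel_measure_general
    (n : ℕ) (u : (Fin n → ℝ) → ℝ)
    (v : Fin n → ℝ)
    (hvert : ∀ i, v i = -2 ∨ v i = 2)
    (hmax : ∀ x ∈ Set.Icc (fun _ => (-2 : ℝ)) (fun _ => 2), u x ≤ u v)
    (ℓ : (Fin n → ℝ) → ℝ) (a : Fin n → ℝ)
    (hℓ : ∀ x, ℓ x = u v + ∑ i, a i * (x i - v i))
    (hsupp : ∀ x, ℓ x ≤ u x) :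
    1 ≤ volume {x ∈ Set.Icc (fun _ => (-3 : ℝ)) (fun _ => 3) | ℓ v ≤ ℓ x} := by
  have hℓv : ℓ v = u v := by simp [hℓ]
  have hslope : ∀ x ∈ Set.Icc (fun _ => (-2 : ℝ)) (fun _ => 2), ∑ i, a i * (x i - v i) ≤ 0 :=
    fun x hx => by linarith [hℓ x, hsupp x, hmax x hx]
  have hcube : outerUnitCube 2 v ⊆ Set.Icc (fun _ => (-3 : ℝ)) (fun _ => 3) := by
    convert outerUnitCube_subset_Icc (ι := Fin n) zero_le_two v using 3 <;> norm_num
  have hsub : outerUnitCube 2 v ⊆ {x ∈ Set.Icc (fun _ => (-3 : ℝ)) (fun _ => 3) | ℓ v ≤ ℓ x} :=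
    fun x hx => ⟨hcube hx,
      by linarith [hℓ x, sum_mul_sub_nonneg_of_mem_outerUnitCube two_pos hvert hslope hx]⟩
  calc (1 : ENNReal) = volume (outerUnitCube 2 v) := (volume_outerUnitCube 2 v).symm
    _ ≤ _ := measure_mono hsub

theorem supporting_plane_superlevel_measure
    (n : ℕ) (C₀ : ℝ) (u : (Fin n → ℝ) → ℝ)
    (hconv : ConvexOn ℝ Set.univ u)
    (hbd : ∀ x ∈ Set.Icc (fun _ => (-2 : ℝ)) (fun _ => 2), |u x| ≤ C₀)
    (v : Fin n → ℝ) (hv : v ∈ Set.Icc (fun _ => (-2 : ℝ)) (fun _ => 2))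
    (hvert : ∀ i, v i = -2 ∨ v i = 2)
    (hmax : ∀ x ∈ Set.Icc (fun _ => (-2 : ℝ)) (fun _ => 2), u x ≤ u v)
    (ℓ : (Fin n → ℝ) → ℝ) (a : Fin n → ℝ)
    (hℓ : ∀ x, ℓ x = u v + ∑ i, a i * (x i - v i))
    (hsupp : ∀ x, ℓ x ≤ u x) :
    1 ≤ volume {x ∈ Set.Icc (fun _ => (-3 : ℝ)) (fun _ => 3) | ℓ v ≤ ℓ x} :=
  supporting_plane_superlevel_measure_general n u v hvert hmax ℓ a hℓ hsupp
end

section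
/- Suppose F : ℝⁿ → ℝ≥0 is a family of functions Fᵏ (k ≥ 0) on a bounded domain P satisfying: (i) Fᵏ ≤ C(k) in L²(P), (ii) the Euclidean gradient satisfies |∇Fᵏ| ≤ c⁻¹ F^{k+1} pointwise for a uniform c > 0, and (iii) F⁰ ≤ 1 pointwise. Then by iterating the Sobolev embedding W^{1,2} ↪ L^q (q = 2n/(n−2) for n > 2, q = 4 for n = 2) finitely many times, each Fᵏ is bounded in L^∞(P) by a constant depending only on k, n, c and the constants C(j). -/
open MeasureTheory

def cubeP (n : ℕ) : Set (Fin n → ℝ) := Set.Icc (fun _ => -(1:ℝ)/2) (fun _ => (1:ℝ)/2)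

/-!
The $L^2$ bounds already imply the $L^\infty$ bounds, without iterating Sobolev embeddings. On a
coordinate segment of the unit cube, a $C^1$ function is bounded at each point by its mean on the
segment plus the integral of $|\partial_i f|$ along it. Applying this once in each of the $n$
coordinate directions, with $|\partial_i F^k| \le c^{-1} F^{k+1}$, gives
$F^k(x) \le (1 + c^{-1})^n \sum_{j \le n} \|F^{k+j}\|_{L^1}$, and $\|F\|_{L^1} \le \|F\|_{L^2}$
because the cube has volume one.
-/

open Set Function Finset ENNReal
open scoped Interval

def cubeSide : Set ℝ := Icc (-(1:ℝ)/2) (1/2)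

noncomputable def cubeSideMeasure : Measure ℝ := volume.restrict cubeSide

instance : IsProbabilityMeasure cubeSideMeasure :=
  ⟨by rw [cubeSideMeasure, Measure.restrict_apply_univ, cubeSide, Real.volume_Icc]; norm_num⟩

lemma cubeP_eq_pi (n : ℕ) : cubeP n = univ.pi fun _ => cubeSide := by
  rw [cubeSide, Set.pi_univ_Icc]; rfl

lemma pi_cubeSideMeasure (n : ℕ) :
    Measure.pi (fun _ : Fin n => cubeSideMeasure) = volume.restrict (cubeP n) := by
  refine Measure.pi_eq fun s hs => ?_
  rw [cubeP_eq_pi, Measure.restrict_apply (MeasurableSet.univ_pi hs), ← Set.pi_inter_distrib,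
    volume_pi_pi]
  simp only [cubeSideMeasure, Measure.restrict_apply (hs _)]

lemma sub_le_setIntegral_of_norm_deriv_le {h h' g : ℝ → ℝ} {a b t t' : ℝ}
    (ht : t ∈ Icc a b) (ht' : t' ∈ Icc a b) (hderiv : ∀ u ∈ Icc a b, HasDerivAt h (h' u) u)
    (hh' : IntegrableOn h' (Icc a b)) (hg : IntegrableOn g (Icc a b))
    (hbound : ∀ u ∈ Icc a b, ‖h' u‖ ≤ g u) :
    h t' - h t ≤ ∫ u in Icc a b, g u := by
  have hsub : uIcc t t' ⊆ Icc a b := uIcc_subset_Icc ht ht'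
  have hsub' : Ι t t' ⊆ Icc a b := uIoc_subset_uIcc.trans hsub
  calc h t' - h t = ∫ u in t..t', h' u :=
        (intervalIntegral.integral_eq_sub_of_hasDerivAt (fun u hu => hderiv u (hsub hu))
          ((hh'.mono_set hsub).intervalIntegrable)).symm
    _ ≤ ∫ u in Ι t t', ‖h' u‖ :=
        (Real.le_norm_self _).trans intervalIntegral.norm_integral_le_integral_norm_uIoc
    _ ≤ ∫ u in Ι t t', g u :=
        setIntegral_mono_on (hh'.mono_set hsub').norm (hg.mono_set hsub') measurableSet_uIoc
          fun u hu => hbound u (hsub' hu)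
    _ ≤ ∫ u in Icc a b, g u :=
        setIntegral_mono_set hg
          (ae_restrict_of_forall_mem measurableSet_Icc fun u hu =>
            (norm_nonneg _).trans (hbound u hu))
          hsub'.eventuallyLE

lemma apply_update_le_add_setIntegral {ι : Type*} [Fintype ι] [DecidableEq ι]
    {f G : (ι → ℝ) → ℝ} (hf : ContDiff ℝ 1 f) (hG : Continuous G)
    (hbound : ∀ x, ‖fderiv ℝ f x‖ ≤ G x) (y : ι → ℝ) (i : ι) {a b t t' : ℝ}
    (ht : t ∈ Icc a b) (ht' : t' ∈ Icc a b) :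
    f (update y i t') ≤ f (update y i t) + ∫ u in Icc a b, G (update y i u) := by
  have hline : Continuous fun u : ℝ => update y i u := continuous_const.update i continuous_id
  set h' : ℝ → ℝ := fun u => fderiv ℝ f (update y i u) (Pi.single i 1)
  have hderiv (u : ℝ) : HasDerivAt (fun u => f (update y i u)) (h' u) u :=
    ((hf.differentiable one_ne_zero) _).hasFDerivAt.comp_hasDerivAt u (hasDerivAt_update y i u)
  have hh' : Continuous h' :=
    ((hf.continuous_fderiv one_ne_zero).comp hline).clm_apply continuous_const
  have hbound' (u : ℝ) : ‖h' u‖ ≤ G (update y i u) :=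
    calc ‖h' u‖ ≤ ‖fderiv ℝ f (update y i u)‖ * ‖(Pi.single i 1 : ι → ℝ)‖ :=
          ContinuousLinearMap.le_opNorm _ _
      _ = ‖fderiv ℝ f (update y i u)‖ := by rw [Pi.norm_single, norm_one, mul_one]
      _ ≤ G (update y i u) := hbound _
  have := sub_le_setIntegral_of_norm_deriv_le (g := fun u => G (update y i u)) ht ht'
    (fun u _ => hderiv u) hh'.integrableOn_Icc (hG.comp hline).integrableOn_Icc
    (fun u _ => hbound' u)
  linarith

section Marginal

variable {δ : Type*} [DecidableEq δ] {X : δ → Type*} [∀ i, MeasurableSpace (X i)]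
  {μ : ∀ i, Measure (X i)} [∀ i, IsProbabilityMeasure (μ i)]

lemma lmarginal_le_lmarginal_insert_add {f g : (∀ i, X i) → ℝ≥0∞} (hf : Measurable f)
    (hg : Measurable g) {K : ℝ≥0∞} {s : Finset δ} {i : δ} (hi : i ∉ s) {S : Set (X i)}
    (hS : ∀ᵐ t ∂μ i, t ∈ S)
    (hfg : ∀ y, ∀ t ∈ S, ∀ t' ∈ S,
      f (update y i t') ≤ f (update y i t) + K * ∫⁻ u, g (update y i u) ∂μ i)
    {x : ∀ i, X i} (hx : x i ∈ S) :
    (∫⋯∫⁻_s, f ∂μ) x ≤ (∫⋯∫⁻_insert i s, f ∂μ) x + K * (∫⋯∫⁻_insert i s, g ∂μ) x := by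
  set gᵢ : (∀ i, X i) → ℝ≥0∞ := fun y => ∫⁻ u, g (update y i u) ∂μ i
  have hgᵢ : Measurable gᵢ := by simpa only [lmarginal_singleton] using hg.lmarginal μ (s := {i})
  have hmoved (t : X i) (ht : t ∈ S) :
      (∫⋯∫⁻_s, f ∂μ) x ≤ (∫⋯∫⁻_s, f ∂μ) (update x i t) + K * (∫⋯∫⁻_insert i s, g ∂μ) x := by
    have hf_t : Measurable fun y : (∀ j : s, X j) => f (update (updateFinset x s y) i t) :=
      (hf.comp measurable_update_left).comp measurable_updateFinset
    have hgᵢ_s : Measurable fun y : (∀ j : s, X j) => gᵢ (updateFinset x s y) :=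
      hgᵢ.comp measurable_updateFinset
    -- Freezing the `i`-th coordinate at `x i ∈ S` makes `hfg` applicable under the marginal.
    calc (∫⋯∫⁻_s, f ∂μ) x = (∫⋯∫⁻_s, f ∂μ) (update x i (x i)) := by rw [update_eq_self]
      _ = (∫⋯∫⁻_s, fun y => f (update y i (x i)) ∂μ) x := lmarginal_update_of_notMem hf hi _ _
      _ ≤ (∫⋯∫⁻_s, fun y => f (update y i t) + K * gᵢ y ∂μ) x :=
          lmarginal_mono (fun y => hfg y t ht (x i) hx) x
      _ = (∫⋯∫⁻_s, fun y => f (update y i t) ∂μ) x + K * (∫⋯∫⁻_s, gᵢ ∂μ) x := by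
          rw [lmarginal, lintegral_add_left hf_t, lintegral_const_mul _ hgᵢ_s]
          rfl
      _ = (∫⋯∫⁻_s, f ∂μ) (update x i t) + K * (∫⋯∫⁻_insert i s, g ∂μ) x := by
          rw [lmarginal_update_of_notMem hf hi, lmarginal_insert' g hg hi]
          rfl
  calc (∫⋯∫⁻_s, f ∂μ) x = ∫⁻ _, (∫⋯∫⁻_s, f ∂μ) x ∂μ i := by simp
    _ ≤ ∫⁻ t, ((∫⋯∫⁻_s, f ∂μ) (update x i t) + K * (∫⋯∫⁻_insert i s, g ∂μ) x) ∂μ i :=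
        lintegral_mono_ae (hS.mono hmoved)
    _ = (∫⋯∫⁻_insert i s, f ∂μ) x + K * (∫⋯∫⁻_insert i s, g ∂μ) x := by
        rw [lintegral_add_right _ measurable_const, lmarginal_insert _ hf hi]
        simp

end Marginal

lemma le_pow_mul_sum_of_le_insert_add {δ : Type*} [Fintype δ] [DecidableEq δ]
    {Φ : Finset δ → ℕ → ℝ≥0∞} {K : ℝ≥0∞}
    (hΦ : ∀ s i, i ∉ s → ∀ m, Φ s m ≤ Φ (insert i s) m + K * Φ (insert i s) (m + 1))
    (d : ℕ) {s : Finset δ} (hs : Fintype.card δ ≤ #s + d) (m : ℕ) :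
    Φ s m ≤ (1 + K) ^ d * ∑ j ∈ range (d + 1), Φ univ (m + j) := by
  induction d generalizing s m with
  | zero =>
    rw [eq_univ_of_card s (le_antisymm (card_le_univ s) (by simpa using hs))]
    simp
  | succ d ih =>
    set T : ℕ → ℕ → ℝ≥0∞ := fun d m => ∑ j ∈ range (d + 1), Φ univ (m + j)
    have hT : T d m ≤ T (d + 1) m := sum_le_sum_of_subset (range_subset_range.mpr (by omega))
    have hT_succ : T d (m + 1) ≤ T (d + 1) m := by
      simp only [T, sum_range_succ' _ (d + 1), add_zero]
      exact le_self_add.trans_eq' (sum_congr rfl fun j _ => by rw [add_right_comm, add_assoc])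
    by_cases hsu : s = Finset.univ
    · subst hsu
      calc Φ univ m ≤ (1 + K) ^ d * T d m := ih (by simp) m
        _ ≤ (1 + K) ^ (d + 1) * T (d + 1) m := by
          gcongr
          exacts [le_self_add, d.le_succ]
    · obtain ⟨i, hi⟩ : ∃ i, i ∉ s := by simpa [Finset.eq_univ_iff_forall] using hsu
      have hs' : Fintype.card δ ≤ #(insert i s) + d := by rw [card_insert_of_notMem hi]; omega
      calc Φ s m ≤ Φ (insert i s) m + K * Φ (insert i s) (m + 1) := hΦ s i hi m
        _ ≤ (1 + K) ^ d * T d m + K * ((1 + K) ^ d * T d (m + 1)) := by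
          gcongr <;> exact ih hs' _
        _ ≤ (1 + K) ^ d * T (d + 1) m + K * ((1 + K) ^ d * T (d + 1) m) := by gcongr
        _ = (1 + K) ^ (d + 1) * T (d + 1) m := by ring

section Family

variable {ι : Type*} [Fintype ι] [DecidableEq ι] {F : ℕ → (ι → ℝ) → ℝ} {c : ℝ}

lemma ofReal_apply_update_le_add_mul_lintegral (hF : ∀ k, ContDiff ℝ 1 (F k))
    (hFnn : ∀ k x, 0 ≤ F k x) (hgrad : ∀ k x, ‖fderiv ℝ (F k) x‖ ≤ c⁻¹ * F (k + 1) x)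
    (m : ℕ) (y : ι → ℝ) (i : ι) {t t' : ℝ} (ht : t ∈ cubeSide) (ht' : t' ∈ cubeSide) :
    ENNReal.ofReal (F m (update y i t')) ≤ ENNReal.ofReal (F m (update y i t))
      + ENNReal.ofReal c⁻¹ * ∫⁻ u, ENNReal.ofReal (F (m + 1) (update y i u)) ∂cubeSideMeasure := by
  have hline : Continuous fun u : ℝ => F (m + 1) (update y i u) :=
    (hF (m + 1)).continuous.comp (continuous_const.update i continuous_id)
  have hlintegral : ENNReal.ofReal (∫ u, F (m + 1) (update y i u) ∂cubeSideMeasure)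
      = ∫⁻ u, ENNReal.ofReal (F (m + 1) (update y i u)) ∂cubeSideMeasure :=
    ofReal_integral_eq_lintegral_ofReal hline.integrableOn_Icc
      (Filter.Eventually.of_forall fun _ => hFnn _ _)
  calc ENNReal.ofReal (F m (update y i t'))
      ≤ ENNReal.ofReal
          (F m (update y i t) + ∫ u, c⁻¹ * F (m + 1) (update y i u) ∂cubeSideMeasure) :=
        ofReal_le_ofReal (apply_update_le_add_setIntegral (hF m)
          (continuous_const.mul (hF (m + 1)).continuous) (hgrad m) y i ht ht')
    _ ≤ ENNReal.ofReal (F m (update y i t))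
          + ENNReal.ofReal (c⁻¹ * ∫ u, F (m + 1) (update y i u) ∂cubeSideMeasure) := by
        rw [integral_const_mul]
        exact ofReal_add_le
    _ = _ := by
        rw [ENNReal.ofReal_mul' (integral_nonneg fun _ => hFnn _ _), hlintegral]

lemma ofReal_le_pow_mul_sum_lintegral (hF : ∀ k, ContDiff ℝ 1 (F k))
    (hFnn : ∀ k x, 0 ≤ F k x) (hgrad : ∀ k x, ‖fderiv ℝ (F k) x‖ ≤ c⁻¹ * F (k + 1) x)
    {x : ι → ℝ} (hx : ∀ i, x i ∈ cubeSide) (k : ℕ) :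
    ENNReal.ofReal (F k x) ≤ (1 + ENNReal.ofReal c⁻¹) ^ Fintype.card ι
      * ∑ j ∈ range (Fintype.card ι + 1),
          ∫⁻ z, ENNReal.ofReal (F (k + j) z) ∂Measure.pi fun _ => cubeSideMeasure := by
  have hmeas (m : ℕ) : Measurable fun z => ENNReal.ofReal (F m z) :=
    (hF m).continuous.measurable.ennreal_ofReal
  have hstep (s : Finset ι) (i : ι) (hi : i ∉ s) (m : ℕ) :=
    lmarginal_le_lmarginal_insert_add (μ := fun _ => cubeSideMeasure) (hmeas m) (hmeas (m + 1))
      hi (ae_restrict_mem measurableSet_Icc)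
      (fun y _ ht _ ht' => ofReal_apply_update_le_add_mul_lintegral hF hFnn hgrad m y i ht ht')
      (hx i)
  simpa using le_pow_mul_sum_of_le_insert_add hstep (Fintype.card ι) (s := ∅) (by simp) k

end Family

lemma integral_le_sqrt_integral_sq {α : Type*} [MeasurableSpace α] {μ : Measure α}
    [IsProbabilityMeasure μ] {f : α → ℝ} (hf : MemLp f 2 μ) :
    ∫ x, f x ∂μ ≤ √(∫ x, f x ^ 2 ∂μ) := by
  have hvar := ProbabilityTheory.variance_nonneg f μ
  rw [ProbabilityTheory.variance_eq_sub hf] at hvar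
  exact (le_abs_self _).trans (Real.abs_le_sqrt (by simpa using hvar))

lemma lintegral_pi_cubeSideMeasure_le_sqrt {n : ℕ} {f : (Fin n → ℝ) → ℝ} (hf : Continuous f)
    (hf₀ : ∀ x, 0 ≤ f x) :
    ∫⁻ z, ENNReal.ofReal (f z) ∂Measure.pi (fun _ => cubeSideMeasure)
      ≤ ENNReal.ofReal √(∫ z in cubeP n, f z ^ 2) := by
  have : IsProbabilityMeasure (volume.restrict (cubeP n)) := pi_cubeSideMeasure n ▸ inferInstance
  have hcompact : IsCompact (cubeP n) := isCompact_Icc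
  have hL2 : MemLp f 2 (volume.restrict (cubeP n)) :=
    (memLp_two_iff_integrable_sq hf.aestronglyMeasurable).2
      ((hf.pow 2).continuousOn.integrableOn_compact hcompact)
  rw [pi_cubeSideMeasure, ← ofReal_integral_eq_lintegral_ofReal
    (hf.continuousOn.integrableOn_compact hcompact) (ae_of_all _ hf₀)]
  exact ofReal_le_ofReal (integral_le_sqrt_integral_sq hL2)

theorem sobolev_bootstrap_Linfty_bound_general
    (n : ℕ) (c : ℝ) (C : ℕ → ℝ) :
    ∃ B : ℕ → ℝ, ∀ F : ℕ → (Fin n → ℝ) → ℝ,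
      (∀ k, ContDiff ℝ 1 (F k)) →
      (∀ k x, 0 ≤ F k x) →
      (∀ k, (∫ x in cubeP n, (F k x) ^ 2) ≤ C k) →
      (∀ k x, ‖fderiv ℝ (F k) x‖ ≤ c⁻¹ * F (k + 1) x) →
      (∀ x, F 0 x ≤ 1) →
      ∀ k, ∀ x ∈ cubeP n, F k x ≤ B k := by
  refine ⟨fun k => ((1 + ENNReal.ofReal c⁻¹) ^ n
    * ∑ j ∈ range (n + 1), ENNReal.ofReal √(C (k + j))).toReal, ?_⟩
  intro F hF hFnn hL2 hgrad _ k x hx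
  rw [← ENNReal.ofReal_le_iff_le_toReal <| mul_ne_top
    (pow_ne_top (add_ne_top.2 ⟨one_ne_top, ofReal_ne_top⟩)) (sum_ne_top.2 fun _ _ => ofReal_ne_top)]
  calc ENNReal.ofReal (F k x)
      ≤ (1 + ENNReal.ofReal c⁻¹) ^ n * ∑ j ∈ range (n + 1),
          ∫⁻ z, ENNReal.ofReal (F (k + j) z) ∂Measure.pi fun _ => cubeSideMeasure := by
        simpa using ofReal_le_pow_mul_sum_lintegral hF hFnn hgrad (fun i => ⟨hx.1 i, hx.2 i⟩) k
    _ ≤ (1 + ENNReal.ofReal c⁻¹) ^ n * ∑ j ∈ range (n + 1), ENNReal.ofReal √(C (k + j)) := by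
        gcongr with j
        exact (lintegral_pi_cubeSideMeasure_le_sqrt (hF _).continuous (hFnn _)).trans
          (ofReal_le_ofReal (Real.sqrt_le_sqrt (hL2 _)))

theorem sobolev_bootstrap_Linfty_bound
    (n : ℕ) (c : ℝ) (hc : 0 < c) (C : ℕ → ℝ) :
    ∃ B : ℕ → ℝ, ∀ F : ℕ → (Fin n → ℝ) → ℝ,
      (∀ k, ContDiff ℝ 1 (F k)) →
      (∀ k x, 0 ≤ F k x) →
      (∀ k, (∫ x in cubeP n, (F k x) ^ 2) ≤ C k) →
      (∀ k x, ‖fderiv ℝ (F k) x‖ ≤ c⁻¹ * F (k + 1) x) →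
      (∀ x, F 0 x ≤ 1) →
      ∀ k, ∀ x ∈ cubeP n, F k x ≤ B k :=
  sobolev_bootstrap_Linfty_bound_general n c C
end
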